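/- arXiv:1412.2374 — 4 statements merged into one kernel-verified Lean document; each statement's English description precedes it below -/
import Mathlib

section
/- If H is a generalized Halin graph of order n, then H contains a cycle of length at least n/2. -/
/-- A generalized Halin graph `H = T ∪ C`: `T` is a spanning tree of `H` with no vertex of
degree 2 (a HIST) and `C` is a cycle on the set of leaves of `T`, edge-disjoint from `T`,
and together they account for all edges of `H`. -/
def IsGenHalin {V : Type*} [Fintype V] (H : SimpleGraph V) : Prop :=
  ∃ T : SimpleGraph V, T ≤ H ∧ T.IsTree ∧ (∀ v : V, (T.neighborSet v).ncard ≠ 2) ∧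
    ∃ (v : V) (c : H.Walk v v), c.IsCycle ∧
      (∀ u : V, u ∈ c.support ↔ (T.neighborSet u).ncard = 1) ∧
      (∀ e ∈ c.edges, e ∉ T.edgeSet) ∧
      H.edgeSet = T.edgeSet ∪ {e | e ∈ c.edges}

/-!
Every leaf of the HIST `T` lies on the cycle `C`, so `|C|` is the number `ℓ` of leaves of `T`.
Since `T` has no vertex of degree 2, the degree sum gives `2(n - 1) ≥ ℓ + 3(n - ℓ)`,
that is `n + 2 ≤ 2ℓ`; hence `C` itself already has length at least `n/2`.
-/

namespace SimpleGraph

variable {V : Type*}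

lemma ncard_neighborSet_eq_degree (G : SimpleGraph V) (v : V) [Fintype (G.neighborSet v)] :
    (G.neighborSet v).ncard = G.degree v := by
  rw [← Nat.card_coe_set_eq, Nat.card_eq_fintype_card, card_neighborSet_eq_degree]

lemma Walk.IsCycle.card_support_toFinset [DecidableEq V] {G : SimpleGraph V} {v : V}
    {c : G.Walk v v} (hc : c.IsCycle) : c.support.toFinset.card = c.length := by
  rw [← c.cons_tail_support, List.toFinset_cons,
    Finset.insert_eq_of_mem (List.mem_toFinset.2 (c.end_mem_tail_support hc.not_nil)),
    List.toFinset_card_of_nodup hc.support_nodup, List.length_tail, c.length_support,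
    Nat.add_sub_cancel]

open Finset in
theorem IsTree.card_add_two_le_two_mul_card_leaves [Fintype V] [Nontrivial V]
    {T : SimpleGraph V} [DecidableRel T.Adj] (hT : T.IsTree) (h2 : ∀ v, T.degree v ≠ 2) :
    Fintype.card V + 2 ≤ 2 * #{v | T.degree v = 1} := by
  classical
  set L : Finset V := {v | T.degree v = 1}
  have hleaves : ∑ v ∈ L, T.degree v = #L := by
    rw [card_eq_sum_ones]
    exact sum_congr rfl fun v hv => (mem_filter.1 hv).2
  have hinner : 3 * #Lᶜ ≤ ∑ v ∈ Lᶜ, T.degree v := by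
    rw [mul_comm, ← smul_eq_mul, ← sum_const]
    refine sum_le_sum fun v hv => ?_
    have hpos := hT.preconnected.degree_pos_of_nontrivial v
    have hne1 : T.degree v ≠ 1 := by simpa [L] using hv
    have := h2 v
    omega
  have hedges := hT.card_edgeFinset
  have hsum := T.sum_degrees_eq_twice_card_edges
  have hsplit := sum_add_sum_compl L fun v => T.degree v
  have hcard := card_add_card_compl L
  omega

end SimpleGraph

/-- A generalized Halin graph of order `n` contains a cycle of length at least `n/2`. -/
theorem stmt_1 {V : Type*} [Fintype V] (H : SimpleGraph V) (hH : IsGenHalin H) :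
    ∃ (v : V) (c : H.Walk v v), c.IsCycle ∧ Fintype.card V ≤ 2 * c.length := by
  classical
  obtain ⟨T, -, hT, hdeg2, v, c, hc, hleaf, -, -⟩ := hH
  refine ⟨v, c, hc, ?_⟩
  have : Nontrivial V := ⟨⟨v, c.snd, (c.adj_snd hc.not_nil).ne⟩⟩
  have hsupp : c.support.toFinset = ({u | T.degree u = 1} : Finset V) := by
    ext u
    simp [hleaf, SimpleGraph.ncard_neighborSet_eq_degree]
  have hleaves := hT.card_add_two_le_two_mul_card_leaves
    fun u => by simpa [SimpleGraph.ncard_neighborSet_eq_degree] using hdeg2 u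
  rw [← hsupp, hc.card_support_toFinset] at hleaves
  omega
end

section
/- Let H be a graph on n vertices with δ(H) ≥ (2/3 − α')n for some constant 0 < α' ≪ 1, and let v_R ∈ V(H) be arbitrary. Then H has a spanning tree T with no vertex of degree 2 such that v_R has degree at least (2/3 − α')n − 1 in T, and the number of non-leaf vertices of T is at most (1/6 + α'/2)n + 2. -/
/-!
Root the tree at `v_R`, hang every neighbour of `v_R` directly below it, and give each remaining
("far") vertex a parent among the neighbours of `v_R`: the minimum degree makes any two vertices
share at least `(1/3 - 2α')n` neighbours, so such parents exist. A vertex of the resulting tree has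
degree 2 exactly when it is a non-root vertex with a single child. For a parent assignment with the
fewest such vertices, their only children have pairwise disjoint neighbourhoods inside `N(v_R)`, so
there are at most three of them. Two of them are hung below a common (necessarily far) neighbour,
and the last one is repaired by moving a childless neighbour `u₀` of `v_R` below its parent, which
costs the root a single child. Every non-root inner vertex then has at least two children, all of
them far vertices or `u₀`, so at most `1 + (k + 1)/2` vertices are not leaves, where
`k ≤ (1/3 + α')n - 1` is the number of far vertices.
-/

open Finset Relation

namespace SimpleGraph

variable {V : Type*}

/-- `f` is the parent function of a spanning tree of `H` rooted at `r`; that tree is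
`parentGraph f`. -/
structure IsParentMap (H : SimpleGraph V) (r : V) (f : V → V) : Prop where
  map_root : f r = r
  adj : ∀ v, v ≠ r → H.Adj v (f v)
  reaches : ∀ v, ReflTransGen (fun a b => f a = b) v r

def parentGraph (f : V → V) : SimpleGraph V := fromRel fun a b => f a = b

/-- The root is excluded: it is its own parent but not its own child. -/
def children [Fintype V] [DecidableEq V] (f : V → V) (r v : V) : Finset V :=
  {u | u ≠ r ∧ f u = v}

/-- The non-root vertices of degree 2 in `parentGraph f`. -/
def unary [Fintype V] [DecidableEq V] (f : V → V) (r : V) : Finset V :=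
  {v | v ≠ r ∧ #(children f r v) = 1}

def graft [DecidableEq V] (f : V → V) (A : Finset V) (q : V) : V → V :=
  fun u => if u ∈ A then q else f u

section Children

variable [Fintype V] [DecidableEq V] {r q : V} {f : V → V} {A : Finset V}

theorem mem_children {u v : V} : u ∈ children f r v ↔ u ≠ r ∧ f u = v := by
  simp [children]

theorem mem_unary {v : V} : v ∈ unary f r ↔ v ≠ r ∧ #(children f r v) = 1 := by
  simp [unary]

theorem card_children_ne_one_of_unary_eq_empty (hunary : unary f r = ∅) {v : V} (hv : v ≠ r) :
    #(children f r v) ≠ 1 := fun h =>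
  notMem_empty v (hunary ▸ mem_unary.2 ⟨hv, h⟩)

theorem mul_card_le_card_of_le_card_children {S : Finset V} (hS : r ∉ S) {m : ℕ}
    (hm : ∀ v ∈ S, m ≤ #(children f r v)) : m * #S ≤ #{u | u ≠ r ∧ f u ≠ r} := by
  have hfiber : ∀ v ∈ S, #{u ∈ {u | u ≠ r ∧ f u ∈ S} | f u = v} = #(children f r v) :=
    fun v hv => congrArg card <| by
      ext u
      simp only [mem_filter, mem_univ, true_and, mem_children]
      exact ⟨fun h => ⟨h.1.1, h.2⟩, fun h => ⟨⟨h.1, h.2 ▸ hv⟩, h.2⟩⟩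
  calc m * #S ≤ #{u | u ≠ r ∧ f u ∈ S} :=
        mul_card_image_le_card_of_maps_to (fun u hu => (mem_filter.1 hu).2.2) m fun v hv =>
          (hm v hv).trans_eq (hfiber v hv).symm
    _ ≤ #{u | u ≠ r ∧ f u ≠ r} :=
        card_le_card fun u hu => by
          simp only [mem_filter, mem_univ, true_and] at hu ⊢
          exact ⟨hu.1, fun h => hS (h ▸ hu.2)⟩

theorem two_mul_card_parents_le {p₀ : V} (hunary : ∀ v ∈ unary f r, v = p₀) :
    2 * #{v | v ≠ r ∧ (children f r v).Nonempty} ≤ 2 + #{u | u ≠ r ∧ f u ≠ r} := by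
  set P : Finset V := {v | v ≠ r ∧ (children f r v).Nonempty}
  have hP : 2 * #(P.erase p₀) ≤ #{u | u ≠ r ∧ f u ≠ r} := by
    refine mul_card_le_card_of_le_card_children (by simp [P]) fun v hv => ?_
    obtain ⟨hvp₀, hv⟩ := mem_erase.1 hv
    obtain ⟨hvr, hvne⟩ := (mem_filter.1 hv).2
    have : #(children f r v) ≠ 1 := fun h => hvp₀ (hunary v (mem_unary.2 ⟨hvr, h⟩))
    have := hvne.card_pos
    omega
  have := pred_card_le_card_erase (s := P) (a := p₀)
  omega

theorem children_graft (hr : r ∉ A) (v : V) :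
    children (graft f A q) r v = if v = q then children f r v ∪ A else children f r v \ A := by
  ext u
  by_cases hu : u ∈ A
  · have hur : u ≠ r := fun h => hr (h ▸ hu)
    split_ifs with hv
    · simp [mem_children, graft, hu, hur, hv]
    · simp [mem_children, graft, hu, Ne.symm hv]
  · split_ifs with hv <;> simp [mem_children, graft, hu]

theorem unary_graft_subset (hr : r ∉ A)
    (hA : ∀ a ∈ A, f a = r ∨ children f r (f a) = {a}) (hq : 2 ≤ #(children f r q ∪ A)) :
    unary (graft f A q) r ⊆ unary f r \ insert q (A.image f) := by
  intro v hv
  rw [mem_unary, children_graft hr] at hv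
  obtain ⟨hvr, hv⟩ := hv
  split_ifs at hv with hvq
  · subst hvq
    omega
  have hvA : v ∉ A.image f := by
    simp only [mem_image, not_exists, not_and]
    rintro a ha rfl
    rcases hA a ha with h | h
    · exact hvr h
    · rw [h, sdiff_eq_empty_iff_subset.2 (singleton_subset_iff.2 ha)] at hv
      simp at hv
  have hdisj : children f r v \ A = children f r v :=
    sdiff_eq_self_of_disjoint <| Finset.disjoint_left.2 fun a ha haA =>
      hvA (mem_image.2 ⟨a, haA, (mem_children.1 ha).2⟩)
  rw [hdisj] at hv
  simp [mem_unary, hvr, hv, hvq, hvA]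

theorem card_unary_graft_pair_add_two {p₁ p₂ c₁ c₂ : V} (hp₁ : p₁ ∈ unary f r)
    (hp₂ : p₂ ∈ unary f r) (hne : p₁ ≠ p₂) (hc₁ : children f r p₁ = {c₁})
    (hc₂ : children f r p₂ = {c₂}) : #(unary (graft f {c₁, c₂} q) r) + 2 ≤ #(unary f r) := by
  obtain ⟨hc₁r, hfc₁⟩ := mem_children.1 (hc₁ ▸ mem_singleton_self c₁)
  obtain ⟨hc₂r, hfc₂⟩ := mem_children.1 (hc₂ ▸ mem_singleton_self c₂)
  have hc : c₁ ≠ c₂ := fun h => hne (by rw [← hfc₁, ← hfc₂, h])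
  have hr : r ∉ ({c₁, c₂} : Finset V) := by simp [Ne.symm hc₁r, Ne.symm hc₂r]
  have hA : ∀ a ∈ ({c₁, c₂} : Finset V), f a = r ∨ children f r (f a) = {a} := by
    simp only [mem_insert, mem_singleton]
    rintro a (rfl | rfl)
    · exact Or.inr (hfc₁ ▸ hc₁)
    · exact Or.inr (hfc₂ ▸ hc₂)
  have hq : 2 ≤ #(children f r q ∪ {c₁, c₂}) :=
    (card_pair hc).symm.le.trans (card_le_card subset_union_right)
  have hp : {p₁, p₂} ⊆ unary f r := insert_subset hp₁ (singleton_subset_iff.2 hp₂)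
  have hsub : unary (graft f {c₁, c₂} q) r ⊆ unary f r \ {p₁, p₂} :=
    (unary_graft_subset hr hA hq).trans <| sdiff_subset_sdiff le_rfl <|
      insert_subset (mem_insert_of_mem (mem_image.2 ⟨c₁, by simp, hfc₁⟩))
        (singleton_subset_iff.2 (mem_insert_of_mem (mem_image.2 ⟨c₂, by simp, hfc₂⟩)))
  have := card_le_card hsub
  rw [card_sdiff_of_subset hp, card_pair hne] at this
  have := card_le_card hp
  rw [card_pair hne] at this
  omega

theorem unary_graft_singleton_eq_empty {p₀ u : V} (hp₀ : p₀ ∈ unary f r)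
    (hunary : ∀ v ∈ unary f r, v = p₀) (hu : u ≠ r) (hfu : f u = r) :
    unary (graft f {u} p₀) r = ∅ := by
  obtain ⟨hp₀r, hp₀1⟩ := mem_unary.1 hp₀
  have hr : r ∉ ({u} : Finset V) := by simpa using hu.symm
  have hq : 2 ≤ #(children f r p₀ ∪ {u}) := by
    rw [card_union_of_disjoint (disjoint_singleton_right.2 fun h =>
      hp₀r ((mem_children.1 h).2.symm.trans hfu)), hp₀1, card_singleton]
  refine eq_empty_of_forall_notMem fun v hv => ?_
  have := unary_graft_subset hr (by simpa using Or.inl hfu) hq hv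
  rw [mem_sdiff, mem_insert] at this
  exact this.2 (Or.inl (hunary v this.1))

end Children

namespace IsParentMap

variable {H : SimpleGraph V} {r : V} {f : V → V}

theorem root_mem_of_mapsTo (hf : IsParentMap H r f) {S : Set V} (hS : Set.MapsTo f S S)
    {v : V} (hv : v ∈ S) : r ∈ S := by
  induction hf.reaches v using ReflTransGen.head_induction_on with
  | refl => exact hv
  | head hac _ ih => exact ih (hac ▸ hS hv)

theorem eq_root_of_map_eq_self (hf : IsParentMap H r f) {v : V} (hv : f v = v) : v = r :=
  (hf.root_mem_of_mapsTo (S := {v}) (by simpa [Set.MapsTo] using hv) rfl).symm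

theorem eq_of_map_eq_of_map_eq (hf : IsParentMap H r f) {a b : V} (hab : f a = b)
    (hba : f b = a) : a = b := by
  have hS : Set.MapsTo f {a, b} {a, b} := by
    rintro x (rfl | rfl) <;> simp [hab, hba]
  rcases hf.root_mem_of_mapsTo hS (Set.mem_insert a _) with rfl | rfl
  · rw [← hab, hf.map_root]
  · rw [← hba, hf.map_root]

theorem parentGraph_le (hf : IsParentMap H r f) : parentGraph f ≤ H := by
  have key : ∀ a, a ≠ f a → H.Adj a (f a) := fun a hne =>
    hf.adj a fun h => hne (h ▸ hf.map_root.symm)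
  rintro a b ⟨hne, rfl | rfl⟩
  · exact key a hne
  · exact (key b hne.symm).symm

theorem reachable (hf : IsParentMap H r f) (v : V) : (parentGraph f).Reachable v r := by
  induction hf.reaches v using ReflTransGen.head_induction_on with
  | refl => rfl
  | @head a c hac _ ih =>
    refine Reachable.trans ?_ ih
    by_cases h : a = c
    · rw [h]
    · exact Adj.reachable ⟨h, Or.inl hac⟩

theorem edgeSet_eq (hf : IsParentMap H r f) :
    (parentGraph f).edgeSet = (fun v => s(v, f v)) '' {v | v ≠ r} := by
  ext e
  induction e with
  | h a b =>
    simp only [mem_edgeSet, parentGraph, fromRel_adj, Set.mem_image, Set.mem_ofPred_eq]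
    constructor
    · rintro ⟨hne, rfl | rfl⟩
      · exact ⟨a, fun h => hne (by rw [h, hf.map_root]), rfl⟩
      · exact ⟨b, fun h => hne (by rw [h, hf.map_root]), Sym2.eq_swap⟩
    · rintro ⟨v, hv, hvab⟩
      rcases Sym2.eq_iff.1 hvab with ⟨rfl, rfl⟩ | ⟨rfl, rfl⟩
      · exact ⟨fun h => hv (hf.eq_root_of_map_eq_self h.symm), Or.inl rfl⟩
      · exact ⟨fun h => hv (hf.eq_root_of_map_eq_self h), Or.inr rfl⟩

theorem isTree [Finite V] (hf : IsParentMap H r f) : (parentGraph f).IsTree := by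
  rw [isTree_iff_connected_and_card]
  refine ⟨(connected_iff_exists_forall_reachable _).2 ⟨r, fun v => (hf.reachable v).symm⟩, ?_⟩
  have hinj : Set.InjOn (fun v => s(v, f v)) {v | v ≠ r} := by
    intro a _ b _ hab
    rcases Sym2.eq_iff.1 hab with ⟨h, _⟩ | ⟨h₁, h₂⟩
    · exact h
    · exact hf.eq_of_map_eq_of_map_eq h₂ h₁.symm
  rw [Nat.card_coe_set_eq, hf.edgeSet_eq, hinj.ncard_image,
    ← Set.ncard_compl_add_ncard {r}, Set.ncard_singleton]
  rfl

variable [DecidableEq V] [Fintype V]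

theorem graft {q : V} {A : Finset V} (hf : IsParentMap H r f) (hr : r ∉ A)
    (hq : q ∉ A) (hA : ∀ a ∈ A, children f r a = ∅) (hadj : ∀ a ∈ A, H.Adj a q) :
    IsParentMap H r (graft f A q) := by
  -- The path from a vertex to the root never passes through a childless vertex.
  have reaches_of_notMem :
      ∀ v ∉ A, ReflTransGen (fun a b => SimpleGraph.graft f A q a = b) v r := by
    intro v hv
    induction hf.reaches v using ReflTransGen.head_induction_on with
    | refl => rfl
    | @head a c hac _ ih =>
      have hc : c ∉ A := by
        intro hc
        by_cases ha : a = r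
        · exact hr (by rwa [← hac, ha, hf.map_root] at hc)
        · exact notMem_empty a (hA c hc ▸ mem_children.2 ⟨ha, hac⟩)
      exact ReflTransGen.head (by simp [SimpleGraph.graft, hv, hac]) (ih hc)
  refine ⟨by simp [SimpleGraph.graft, hr, hf.map_root], fun v hv => ?_, fun v => ?_⟩
  · by_cases hvA : v ∈ A
    · simpa [SimpleGraph.graft, hvA] using hadj v hvA
    · simpa [SimpleGraph.graft, hvA] using hf.adj v hv
  · by_cases hvA : v ∈ A
    · exact ReflTransGen.head (by simp [SimpleGraph.graft, hvA]) (reaches_of_notMem q hq)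
    · exact reaches_of_notMem v hvA

theorem map_notMem_children (hf : IsParentMap H r f) {v : V} (hv : v ≠ r) :
    f v ∉ children f r v := fun h =>
  hv (hf.eq_root_of_map_eq_self (hf.eq_of_map_eq_of_map_eq rfl (mem_children.1 h).2).symm)

theorem neighborSet_root (hf : IsParentMap H r f) :
    (parentGraph f).neighborSet r = children f r r := by
  ext u
  simp only [mem_neighborSet, parentGraph, fromRel_adj, children, coe_filter, mem_univ,
    true_and, Set.mem_ofPred_eq, hf.map_root]
  constructor
  · rintro ⟨hne, rfl | h⟩
    · exact absurd rfl hne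
    · exact ⟨hne.symm, h⟩
  · rintro ⟨hne, h⟩
    exact ⟨hne.symm, Or.inr h⟩

theorem neighborSet_of_ne (hf : IsParentMap H r f) {v : V} (hv : v ≠ r) :
    (parentGraph f).neighborSet v = insert (f v) (children f r v) := by
  ext u
  simp only [mem_neighborSet, parentGraph, fromRel_adj, children, coe_insert, coe_filter,
    mem_univ, true_and, Set.mem_insert_iff, Set.mem_ofPred_eq]
  constructor
  · rintro ⟨hne, rfl | h⟩
    · exact Or.inl rfl
    · exact Or.inr ⟨fun hu => hne (by rw [← h, hu, hf.map_root]), h⟩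
  · rintro (rfl | ⟨hu, h⟩)
    · exact ⟨fun h => hv (hf.eq_root_of_map_eq_self h.symm), Or.inl rfl⟩
    · exact ⟨fun h' => hu (hf.eq_root_of_map_eq_self (h' ▸ h)), Or.inr h⟩

theorem ncard_neighborSet (hf : IsParentMap H r f) (v : V) :
    ((parentGraph f).neighborSet v).ncard = #(children f r v) + if v = r then 0 else 1 := by
  by_cases hv : v = r
  · subst hv
    rw [hf.neighborSet_root, Set.ncard_coe_finset, if_pos rfl, add_zero]
  · rw [hf.neighborSet_of_ne hv, Set.ncard_coe_finset,
      card_insert_of_notMem (hf.map_notMem_children hv), if_neg hv]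

theorem ncard_neighborSet_ne_two (hf : IsParentMap H r f) (hunary : unary f r = ∅)
    (hroot : 3 ≤ #(children f r r)) (v : V) : ((parentGraph f).neighborSet v).ncard ≠ 2 := by
  rw [hf.ncard_neighborSet]
  split_ifs with hv
  · subst hv
    omega
  · have := card_children_ne_one_of_unary_eq_empty hunary hv
    omega

theorem two_mul_ncard_nonleaves_le (hf : IsParentMap H r f) (hunary : unary f r = ∅) :
    2 * {v | 2 ≤ ((parentGraph f).neighborSet v).ncard}.ncard ≤ 2 + #{u | u ≠ r ∧ f u ≠ r} := by
  set S : Finset V := {v | v ≠ r ∧ 2 ≤ #(children f r v)}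
  have hsub : {v | 2 ≤ ((parentGraph f).neighborSet v).ncard} ⊆ ↑(insert r S) := by
    intro v hv
    rw [Set.mem_ofPred_eq, hf.ncard_neighborSet] at hv
    by_cases hvr : v = r
    · simp [hvr]
    · have := card_children_ne_one_of_unary_eq_empty hunary hvr
      rw [if_neg hvr] at hv
      simp only [coe_insert, Set.mem_insert_iff, hvr, coe_filter, mem_univ, true_and,
        Set.mem_ofPred_eq, ne_eq, not_false_eq_true, S, false_or]
      omega
  have hS : 2 * #S ≤ #{u | u ≠ r ∧ f u ≠ r} :=
    mul_card_le_card_of_le_card_children (by simp [S]) fun v hv => (mem_filter.1 hv).2.2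
  have := (Set.ncard_le_ncard hsub).trans_eq (Set.ncard_coe_finset _)
  have := card_insert_le r S
  omega

end IsParentMap

structure IsBFSParentMap (H : SimpleGraph V) (r : V) (g : V → V) : Prop where
  map_eq_root : ∀ v, (v = r ∨ H.Adj r v) → g v = r
  adj_of_far : ∀ v, v ≠ r → ¬ H.Adj r v → H.Adj r (g v) ∧ H.Adj v (g v)

namespace IsBFSParentMap

variable {H : SimpleGraph V} {r q : V} {g : V → V}

theorem isParentMap (hg : IsBFSParentMap H r g) : IsParentMap H r g := by
  refine ⟨hg.map_eq_root r (Or.inl rfl), fun v hv => ?_, fun v => ?_⟩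
  · by_cases hrv : H.Adj r v
    · exact hg.map_eq_root v (Or.inr hrv) ▸ hrv.symm
    · exact (hg.adj_of_far v hv hrv).2
  · by_cases hv : v = r
    · rw [hv]
    by_cases hrv : H.Adj r v
    · exact ReflTransGen.single (hg.map_eq_root v (Or.inr hrv))
    · exact ReflTransGen.head rfl <| ReflTransGen.single <|
        hg.map_eq_root _ (Or.inr (hg.adj_of_far v hv hrv).1)

variable [DecidableEq V]

theorem graft {A : Finset V} (hg : IsBFSParentMap H r g) (hq : H.Adj r q)
    (hA : ∀ a ∈ A, a ≠ r ∧ ¬ H.Adj r a ∧ H.Adj a q) : IsBFSParentMap H r (graft g A q) := by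
  refine ⟨fun v hv => ?_, fun v hv hrv => ?_⟩
  · have hvA : v ∉ A := fun h => by
      rcases hv with rfl | hv
      · exact (hA _ h).1 rfl
      · exact (hA v h).2.1 hv
    simpa [SimpleGraph.graft, hvA] using hg.map_eq_root v hv
  · by_cases hvA : v ∈ A
    · simpa [SimpleGraph.graft, hvA] using ⟨hq, (hA v hvA).2.2⟩
    · simpa [SimpleGraph.graft, hvA] using hg.adj_of_far v hv hrv

variable [Fintype V]

theorem children_eq_empty (hg : IsBFSParentMap H r g) {v : V} (hv : v ≠ r)
    (hrv : ¬ H.Adj r v) : children g r v = ∅ := by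
  refine eq_empty_of_forall_notMem fun u hu => ?_
  obtain ⟨hur, rfl⟩ := mem_children.1 hu
  by_cases hru : H.Adj r u
  · exact hv (hg.map_eq_root u (Or.inr hru))
  · exact hrv (hg.adj_of_far u hur hru).1

theorem ne_and_not_adj_of_mem_unary (hg : IsBFSParentMap H r g) {p c : V} (hp : p ∈ unary g r)
    (hc : children g r p = {c}) : c ≠ r ∧ ¬ H.Adj r c := by
  obtain ⟨hcr, hgc⟩ := mem_children.1 (hc ▸ mem_singleton_self c)
  exact ⟨hcr, fun hrc => (mem_unary.1 hp).1 (hgc ▸ hg.map_eq_root c (Or.inr hrc))⟩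

theorem not_adj_of_minimal (hg : IsBFSParentMap H r g)
    (hmin : ∀ g', IsBFSParentMap H r g' → #(unary g r) ≤ #(unary g' r)) {p₁ p₂ c₁ c₂ : V}
    (hp₁ : p₁ ∈ unary g r) (hp₂ : p₂ ∈ unary g r) (hne : p₁ ≠ p₂)
    (hc₁ : children g r p₁ = {c₁}) (hc₂ : children g r p₂ = {c₂}) (hq : H.Adj r q) :
    ¬ (H.Adj c₁ q ∧ H.Adj c₂ q) := by
  rintro ⟨h₁, h₂⟩
  have hg' : IsBFSParentMap H r (SimpleGraph.graft g {c₁, c₂} q) := by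
    refine hg.graft hq ?_
    simp only [mem_insert, mem_singleton]
    rintro a (rfl | rfl)
    · exact ⟨(hg.ne_and_not_adj_of_mem_unary hp₁ hc₁).1,
        (hg.ne_and_not_adj_of_mem_unary hp₁ hc₁).2, h₁⟩
    · exact ⟨(hg.ne_and_not_adj_of_mem_unary hp₂ hc₂).1,
        (hg.ne_and_not_adj_of_mem_unary hp₂ hc₂).2, h₂⟩
  have := hmin _ hg'
  have := card_unary_graft_pair_add_two (q := q) hp₁ hp₂ hne hc₁ hc₂
  omega

variable [DecidableRel H.Adj]

theorem card_unary_le_three (hg : IsBFSParentMap H r g)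
    (hmin : ∀ g', IsBFSParentMap H r g' → #(unary g r) ≤ #(unary g' r)) {c : ℕ}
    (hc : ∀ x y, c ≤ #(H.neighborFinset x ∩ H.neighborFinset y))
    (h4 : Fintype.card V ≤ 4 * c) : #(unary g r) ≤ 3 := by
  set φ : V → Finset V := fun p =>
    H.neighborFinset r ∩ (children g r p).biUnion fun v => H.neighborFinset v
  have hφ : ∀ p ∈ unary g r, ∃ c', children g r p = {c'} ∧
      φ p = H.neighborFinset r ∩ H.neighborFinset c' := fun p hp => by
    obtain ⟨c', hc'⟩ := card_eq_one.1 (mem_unary.1 hp).2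
    exact ⟨c', hc', by simp [φ, hc']⟩
  have hdisj : (unary g r : Set V).PairwiseDisjoint φ := by
    intro p₁ hp₁ p₂ hp₂ hne
    obtain ⟨c₁, hc₁, hφ₁⟩ := hφ p₁ hp₁
    obtain ⟨c₂, hc₂, hφ₂⟩ := hφ p₂ hp₂
    rw [Function.onFun_apply, hφ₁, hφ₂, Finset.disjoint_left]
    simp only [mem_inter, mem_neighborFinset, not_and, and_imp]
    exact fun x hrx h₁ _ h₂ => hg.not_adj_of_minimal hmin hp₁ hp₂ hne hc₁ hc₂ hrx ⟨h₁, h₂⟩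
  have hsum : #(unary g r) * c ≤ #(H.neighborFinset r) :=
    calc #(unary g r) * c ≤ ∑ p ∈ unary g r, #(φ p) := by
          rw [← smul_eq_mul]
          refine card_nsmul_le_sum _ _ _ fun p hp => ?_
          obtain ⟨c', _, hφp⟩ := hφ p hp
          exact hφp ▸ hc r c'
      _ = #((unary g r).biUnion φ) := (card_biUnion hdisj).symm
      _ ≤ #(H.neighborFinset r) := card_le_card (biUnion_subset.2 fun _ _ => inter_subset_left)
  have hN := H.degree_lt_card_verts r
  rw [← card_neighborFinset_eq_degree] at hN
  by_contra! h
  nlinarith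

end IsBFSParentMap

section Construction

variable [Fintype V] [DecidableEq V] {H : SimpleGraph V} [DecidableRel H.Adj] {r : V} {c : ℕ}

theorem exists_isBFSParentMap_minimal
    (hc : ∀ x y, c ≤ #(H.neighborFinset x ∩ H.neighborFinset y)) (hc₀ : 0 < c) :
    ∃ g, IsBFSParentMap H r g ∧ ∀ g', IsBFSParentMap H r g' → #(unary g r) ≤ #(unary g' r) := by
  have hp : ∀ v, ∃ p, H.Adj r p ∧ H.Adj v p := fun v => by
    obtain ⟨p, hp⟩ := card_pos.1 (hc₀.trans_le (hc r v))
    rw [mem_inter, mem_neighborFinset, mem_neighborFinset] at hp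
    exact ⟨p, hp⟩
  choose p hp using hp
  have hg₀ : IsBFSParentMap H r fun v => if v = r ∨ H.Adj r v then r else p v :=
    ⟨fun v hv => if_pos hv, fun v hv hrv => by simpa [hv, hrv] using hp v⟩
  obtain ⟨g, hg, hmin⟩ :=
    (measure fun g => #(unary g r)).wf.has_min {g | IsBFSParentMap H r g} ⟨_, hg₀⟩
  exact ⟨g, hg, fun g' hg' => not_lt.1 (hmin g' hg')⟩

theorem exists_isParentMap_card_unary_le_one
    (hc : ∀ x y, c ≤ #(H.neighborFinset x ∩ H.neighborFinset y))
    (h4 : Fintype.card V ≤ 4 * c) :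
    ∃ f, IsParentMap H r f ∧ (∀ v, H.Adj r v → f v = r) ∧ #(unary f r) ≤ 1 := by
  have hc₀ : 0 < c := by
    have := Fintype.card_pos_iff.2 ⟨r⟩
    omega
  obtain ⟨g, hg, hmin⟩ := exists_isBFSParentMap_minimal (r := r) hc hc₀
  by_cases h1 : #(unary g r) ≤ 1
  · exact ⟨g, hg.isParentMap, fun v hv => hg.map_eq_root v (Or.inr hv), h1⟩
  obtain ⟨p₁, hp₁, p₂, hp₂, hne⟩ := one_lt_card.1 (not_le.1 h1)
  obtain ⟨c₁, hc₁⟩ := card_eq_one.1 (mem_unary.1 hp₁).2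
  obtain ⟨c₂, hc₂⟩ := card_eq_one.1 (mem_unary.1 hp₂).2
  obtain ⟨hc₁r, hrc₁⟩ := hg.ne_and_not_adj_of_mem_unary hp₁ hc₁
  obtain ⟨hc₂r, hrc₂⟩ := hg.ne_and_not_adj_of_mem_unary hp₂ hc₂
  -- Minimality of `g` forces a common neighbour `w` of `c₁, c₂` to be far from `r`, hence
  -- childless, so `c₁, c₂` can be hung below it.
  obtain ⟨w, hw⟩ := card_pos.1 (hc₀.trans_le (hc c₁ c₂))
  rw [mem_inter, mem_neighborFinset, mem_neighborFinset] at hw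
  have hrw : ¬ H.Adj r w := fun hrw => hg.not_adj_of_minimal hmin hp₁ hp₂ hne hc₁ hc₂ hrw hw
  have hA : ∀ a ∈ ({c₁, c₂} : Finset V), a ≠ r ∧ ¬ H.Adj r a ∧ H.Adj a w := by
    simp only [mem_insert, mem_singleton]
    rintro a (rfl | rfl)
    exacts [⟨hc₁r, hrc₁, hw.1⟩, ⟨hc₂r, hrc₂, hw.2⟩]
  refine ⟨graft g {c₁, c₂} w,
    hg.isParentMap.graft (fun h => (hA r h).1 rfl) (fun h => H.irrefl (hA w h).2.2)
      (fun a ha => hg.children_eq_empty (hA a ha).1 (hA a ha).2.1) (fun a ha => (hA a ha).2.2),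
    fun v hv => ?_, ?_⟩
  · have hvA : v ∉ ({c₁, c₂} : Finset V) := fun h => (hA v h).2.1 hv
    simpa [graft, hvA] using hg.map_eq_root v (Or.inr hv)
  · have := card_unary_graft_pair_add_two (q := w) hp₁ hp₂ hne hc₁ hc₂
    have := hg.card_unary_le_three hmin hc h4
    omega

theorem card_map_ne_root_add_card_neighborFinset_le {f : V → V} {X : Finset V}
    (hX : ∀ v ∉ X, H.Adj r v → f v = r) :
    #{u | u ≠ r ∧ f u ≠ r} + #(H.neighborFinset r) + 1 ≤ #X + Fintype.card V := by
  have hsub : ({u | u ≠ r ∧ f u ≠ r} : Finset V) ⊆ X ∪ (insert r (H.neighborFinset r))ᶜ := by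
    intro u hu
    simp only [mem_filter, mem_univ, true_and] at hu
    by_cases huX : u ∈ X
    · exact mem_union_left _ huX
    · refine mem_union_right _ ?_
      simp only [mem_compl, mem_insert, mem_neighborFinset, not_or]
      exact ⟨hu.1, fun h => hu.2 (hX u huX h)⟩
  have h1 := (card_le_card hsub).trans (card_union_le _ _)
  have h2 := card_add_card_compl (insert r (H.neighborFinset r))
  rw [card_insert_of_notMem (notMem_neighborFinset_self _ _)] at h2
  omega

theorem card_neighborFinset_le_card_children_add {f : V → V} {X : Finset V}
    (hX : ∀ v ∉ X, H.Adj r v → f v = r) :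
    #(H.neighborFinset r) ≤ #(children f r r) + #X := by
  refine (card_le_card fun v hv => ?_).trans (card_union_le _ _)
  rw [mem_neighborFinset] at hv
  by_cases hvX : v ∈ X
  · exact mem_union_right _ hvX
  · exact mem_union_left _ (mem_children.2 ⟨hv.ne.symm, hX v hvX hv⟩)

theorem exists_isParentMap_unary_eq_empty
    (hc : ∀ x y, c ≤ #(H.neighborFinset x ∩ H.neighborFinset y))
    (h4 : Fintype.card V ≤ 4 * c) (h2 : Fintype.card V + 1 < 2 * c + #(H.neighborFinset r)) :
    ∃ f u₀, IsParentMap H r f ∧ unary f r = ∅ ∧ ∀ v, v ≠ u₀ → H.Adj r v → f v = r := by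
  obtain ⟨f, hf, hnear, h1⟩ := exists_isParentMap_card_unary_le_one (r := r) hc h4
  obtain h0 | ⟨p₀, hp₀⟩ := (unary f r).eq_empty_or_nonempty
  · exact ⟨f, r, hf, h0, fun v _ => hnear v⟩
  have hunary : ∀ v ∈ unary f r, v = p₀ := fun v hv => card_le_one.1 h1 v hv p₀ hp₀
  -- Few vertices have children, so some neighbour `u₀` of both `p₀` and `r` is childless.
  have hparents := two_mul_card_parents_le hunary
  have hcount := card_map_ne_root_add_card_neighborFinset_le (X := ∅) (f := f) (by simpa using hnear)
  rw [card_empty] at hcount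
  obtain ⟨u₀, hu₀, hu₀P⟩ := exists_mem_notMem_of_card_lt_card
    (s := {v | v ≠ r ∧ (children f r v).Nonempty})
    (t := H.neighborFinset p₀ ∩ H.neighborFinset r) (by have := hc p₀ r; omega)
  rw [mem_inter, mem_neighborFinset, mem_neighborFinset] at hu₀
  have hu₀r : u₀ ≠ r := hu₀.2.ne.symm
  have hu₀c : children f r u₀ = ∅ :=
    not_nonempty_iff_eq_empty.1 fun h => hu₀P (mem_filter.2 ⟨mem_univ _, hu₀r, h⟩)
  refine ⟨graft f {u₀} p₀, u₀,
    hf.graft (by simpa using hu₀r.symm) (by simpa using hu₀.1.ne) (by simpa using hu₀c)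
      (by simpa using hu₀.1.symm),
    unary_graft_singleton_eq_empty hp₀ hunary hu₀r (hnear u₀ hu₀.2), fun v hv hrv => ?_⟩
  simpa [graft, hv] using hnear v hrv

theorem exists_isTree_le_of_le_degree {d : ℕ} (hd : ∀ v, d ≤ H.degree v)
    (hdn : 5 * Fintype.card V + 6 < 8 * d) :
    ∃ T ≤ H, T.IsTree ∧ (∀ v, (T.neighborSet v).ncard ≠ 2) ∧
      d ≤ (T.neighborSet r).ncard + 1 ∧
      2 * {v | 2 ≤ (T.neighborSet v).ncard}.ncard + d ≤ Fintype.card V + 2 := by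
  simp only [← card_neighborFinset_eq_degree] at hd
  have hc : ∀ x y, 2 * d - Fintype.card V ≤ #(H.neighborFinset x ∩ H.neighborFinset y) :=
    fun x y => by
      have := card_union_add_card_inter (H.neighborFinset x) (H.neighborFinset y)
      have := card_le_univ (H.neighborFinset x ∪ H.neighborFinset y)
      have := hd x
      have := hd y
      omega
  have hr := hd r
  have hlt := H.degree_lt_card_verts r
  rw [← card_neighborFinset_eq_degree] at hlt
  obtain ⟨f, u₀, hf, hunary, hnear⟩ :=
    exists_isParentMap_unary_eq_empty (r := r) hc (by omega) (by omega)
  have hX : ∀ v ∉ ({u₀} : Finset V), H.Adj r v → f v = r := fun v hv =>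
    hnear v (by simpa using hv)
  have hroot := card_neighborFinset_le_card_children_add hX
  have hcount := card_map_ne_root_add_card_neighborFinset_le hX
  have hdeg := hf.ncard_neighborSet r
  have hleaves := hf.two_mul_ncard_nonleaves_le hunary
  rw [card_singleton] at hroot hcount
  rw [if_pos rfl, add_zero] at hdeg
  exact ⟨parentGraph f, hf.parentGraph_le, hf.isTree,
    hf.ncard_neighborSet_ne_two hunary (by omega), by omega, by omega⟩

end Construction

end SimpleGraph

theorem stmt_7_general {V : Type*} [Fintype V] (H : SimpleGraph V) (α' : ℝ)
    (hsmall : 8 * α' + 6 / (Fintype.card V : ℝ) < 1 / 3)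
    (hδ : ∀ v : V, ((2 : ℝ) / 3 - α') * (Fintype.card V : ℝ) ≤ (H.neighborSet v).ncard)
    (vR : V) :
    ∃ T : SimpleGraph V, T ≤ H ∧ T.IsTree ∧
      (∀ v : V, (T.neighborSet v).ncard ≠ 2) ∧
      ((2 : ℝ) / 3 - α') * (Fintype.card V : ℝ) - 1 ≤ ((T.neighborSet vR).ncard : ℝ) ∧
      ({v : V | 2 ≤ (T.neighborSet v).ncard}.ncard : ℝ) ≤
        (1 / 6 + α' / 2) * (Fintype.card V : ℝ) + 2 := by
  classical
  set n := Fintype.card V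
  set D := (2 / 3 - α') * (n : ℝ) with hD
  have hn : (0 : ℝ) < n := by exact_mod_cast Fintype.card_pos_iff.2 ⟨vR⟩
  have hdn : 5 * (n : ℝ) + 6 < 8 * D := by
    have := mul_lt_mul_of_pos_right hsmall hn
    rw [add_mul, div_mul_cancel₀ _ hn.ne'] at this
    linarith
  have hd : ∀ v, ⌈D⌉₊ ≤ H.degree v := fun v => Nat.ceil_le.2 <| by
    simpa [← SimpleGraph.card_neighborFinset_eq_degree, ← SimpleGraph.coe_neighborFinset]
      using hδ v
  have hceil : D ≤ ⌈D⌉₊ := Nat.le_ceil D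
  obtain ⟨T, hTH, hT, hT2, hroot, hleaves⟩ :=
    SimpleGraph.exists_isTree_le_of_le_degree (r := vR) hd <| by
      exact_mod_cast hdn.trans_le (by linarith : 8 * D ≤ 8 * (⌈D⌉₊ : ℝ))
  refine ⟨T, hTH, hT, hT2, ?_, ?_⟩
  · have : ((⌈D⌉₊ : ℕ) : ℝ) ≤ (T.neighborSet vR).ncard + 1 := by exact_mod_cast hroot
    linarith
  · have : 2 * ({v | 2 ≤ (T.neighborSet v).ncard}.ncard : ℝ) + ⌈D⌉₊ ≤ n + 2 := by
      exact_mod_cast hleaves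
    linarith

/-- Let `H` be a graph on `n` vertices with `δ(H) ≥ (2/3 − α')n` for a small constant
`α' > 0` (explicitly `8α' + 6/n < 1/3`), and let `v_R ∈ V(H)` be arbitrary.  Then `H` has a
spanning tree `T` with no vertex of degree 2 (a HIST) such that `v_R` has degree at least
`(2/3 − α')n − 1` in `T` and the number of non-leaves of `T` is at most `(1/6 + α'/2)n + 2`. -/
theorem stmt_7 {V : Type*} [Fintype V] (H : SimpleGraph V) (α' : ℝ)
    (hα : 0 < α')
    (hsmall : 8 * α' + 6 / (Fintype.card V : ℝ) < 1 / 3)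
    (hδ : ∀ v : V, ((2 : ℝ) / 3 - α') * (Fintype.card V : ℝ) ≤ (H.neighborSet v).ncard)
    (vR : V) :
    ∃ T : SimpleGraph V, T ≤ H ∧ T.IsTree ∧
      (∀ v : V, (T.neighborSet v).ncard ≠ 2) ∧
      ((2 : ℝ) / 3 - α') * (Fintype.card V : ℝ) - 1 ≤ ((T.neighborSet vR).ncard : ℝ) ∧
      ({v : V | 2 ≤ (T.neighborSet v).ncard}.ncard : ℝ) ≤
        (1 / 6 + α' / 2) * (Fintype.card V : ℝ) + 2 :=
  stmt_7_general H α' hsmall hδ vR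
end

section
/- If G is a graph of order n such that d(x) + d(y) ≥ n + 1 for every pair of nonadjacent vertices x, y, then G is Hamiltonian-connected, i.e., between any two distinct vertices there is a Hamiltonian path. -/
/-!
Adjoin to `G` a new vertex adjacent exactly to `u` and `v`. Hamiltonian `u`–`v` paths of `G` are
then the same as Hamiltonian cycles of the enlarged graph `G⁺` on `n + 1` vertices, and the
hypothesis says `d(x) + d(y) ≥ n + 1 = |G⁺|` for every edge `xy` that `G⁺` lacks compared with the
same construction on the complete graph, which is Hamiltonian. Removing those edges one at a time,
it suffices to know the Bondy–Chvátal step: if `G + xy` is Hamiltonian and `d(x) + d(y) ≥ |G|`,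
then so is `G`. If the Hamiltonian cycle uses `xy`, deleting it leaves a Hamiltonian path
`x = v₀, …, vₘ = y`; among its `m = |G| - 1` steps `vᵢvᵢ₊₁`, `d(x)` end at a neighbour of `x` and
`d(y)` start at a neighbour of `y`, so some step does both, and `x … vᵢ y … vᵢ₊₁ x` is a
Hamiltonian cycle of `G`.
-/

open Finset

theorem List.card_filter_toFinset_of_nodup_map {α β : Type*} [DecidableEq α] [DecidableEq β]
    {l : List α} {f : α → β} (hl : (l.map f).Nodup) {s : Finset β} (hs : ∀ y ∈ s, y ∈ l.map f) :
    #{x ∈ l.toFinset | f x ∈ s} = #s := by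
  refine card_nbij f (fun x hx => (Finset.mem_filter.mp hx).2) ?_ ?_
  · intro x hx y hy hxy
    exact inj_on_of_nodup_map hl (mem_toFinset.mp (Finset.mem_filter.mp hx).1)
      (mem_toFinset.mp (Finset.mem_filter.mp hy).1) hxy
  · intro y hy
    obtain ⟨x, hx, rfl⟩ := mem_map.mp (hs y hy)
    exact ⟨x, Finset.mem_filter.mpr ⟨mem_toFinset.mpr hx, hy⟩, rfl⟩

theorem three_le_card_option_of_ne {V : Type*} [Fintype V] {u v : V} (huv : u ≠ v) :
    3 ≤ Fintype.card (Option V) := by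
  have : 1 < Fintype.card V := Fintype.one_lt_card_iff_nontrivial.mpr ⟨u, v, huv⟩
  rw [Fintype.card_option]
  omega

namespace SimpleGraph

variable {V : Type*} {G : SimpleGraph V}

theorem Embedding.exists_walk_support_map_eq {W : Type*} {H : SimpleGraph W} (φ : G ↪g H)
    {x y : W} (w : H.Walk x y) (hw : ∀ z ∈ w.support, z ∈ Set.range φ) {a b : V}
    (ha : φ a = x) (hb : φ b = y) : ∃ w' : G.Walk a b, w'.support.map φ = w.support := by
  induction w generalizing a with
  | nil =>
    obtain rfl := φ.injective (ha.trans hb.symm)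
    exact ⟨.nil, by simp [ha]⟩
  | @cons _ z _ h w ih =>
    obtain ⟨c, rfl⟩ := hw z (by simp)
    obtain ⟨w', hw'⟩ := ih (fun z hz => hw z (by simp [hz])) rfl hb
    subst ha
    exact ⟨.cons (φ.map_adj_iff.mp h) w', by simp [hw']⟩

namespace Walk

theorem exists_eq_append_cons_of_mem_darts {a b : V} (p : G.Walk a b) {d : G.Dart}
    (hd : d ∈ p.darts) :
    ∃ (q : G.Walk a d.fst) (r : G.Walk d.snd b), p = q.append (cons d.adj r) := by
  induction p with
  | nil => simp at hd
  | cons h p ih =>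
    rcases List.mem_cons.mp hd with rfl | hd
    · exact ⟨nil, p, rfl⟩
    · obtain ⟨q, r, rfl⟩ := ih hd
      exact ⟨cons h q, r, rfl⟩

theorem edges_subset_edgeSet_of_notMem_edges_sup_edge {x y a b : V}
    {p : (G ⊔ edge x y).Walk a b} (h : s(x, y) ∉ p.edges) : ∀ e ∈ p.edges, e ∈ G.edgeSet := by
  intro e he
  rcases (edgeSet_sup _ _ ▸ p.edges_subset_edgeSet he : e ∈ G.edgeSet ∪ (edge x y).edgeSet)
    with hG | hxy
  · exact hG
  · exact absurd (Set.mem_singleton_iff.mp (edgeSet_edge_subset hxy) ▸ he) h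

variable [DecidableEq V] {a b : V}

theorem IsHamiltonian.of_support_perm {c d : V} {p : G.Walk a b} {q : G.Walk c d}
    (hp : p.IsHamiltonian) (h : q.support.Perm p.support) : q.IsHamiltonian :=
  fun x => (h.count_eq x).trans (hp x)

theorem IsHamiltonian.reverse {p : G.Walk a b} (hp : p.IsHamiltonian) :
    p.reverse.IsHamiltonian :=
  hp.of_support_perm (by rw [support_reverse]; exact List.reverse_perm _)

theorem IsHamiltonian.ne [Nontrivial V] {p : G.Walk a b} (hp : p.IsHamiltonian) : a ≠ b := by
  rintro rfl
  obtain ⟨x, hx⟩ := exists_ne a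
  have := hp.mem_support x
  rw [(isPath_iff_nil.mp hp.isPath).eq_nil, support_nil, List.mem_singleton] at this
  exact hx this

theorem IsHamiltonian.transfer {H : SimpleGraph V} {p : G.Walk a b} (hp : p.IsHamiltonian)
    (h : ∀ e ∈ p.edges, e ∈ H.edgeSet) : (p.transfer H h).IsHamiltonian :=
  fun x => by rw [support_transfer]; exact hp x

theorem IsHamiltonian.cons_isHamiltonianCycle [Fintype V] {p : G.Walk a b}
    (hp : p.IsHamiltonian) (h : G.Adj b a) (hn : 3 ≤ Fintype.card V) :
    (cons h p).IsHamiltonianCycle := by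
  have hlen := hp.length_eq
  refine isHamiltonianCycle_iff_isCycle_and_length_eq.mpr
    ⟨(cons_isCycle_iff p h).mpr ⟨hp.isPath, fun he => ?_⟩, by rw [length_cons]; omega⟩
  have := hp.isPath.length_eq_one_of_mem_edges (Sym2.eq_swap ▸ he)
  omega

theorem IsHamiltonianCycle.transfer [Fintype V] {H : SimpleGraph V} {c : G.Walk a a}
    (hc : c.IsHamiltonianCycle) (h : ∀ e ∈ c.edges, e ∈ H.edgeSet) :
    (c.transfer H h).IsHamiltonianCycle :=
  isHamiltonianCycle_iff_isCycle_and_length_eq.mpr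
    ⟨hc.isCycle.transfer h, (length_transfer _ _).trans hc.length_eq⟩

theorem IsHamiltonianCycle.exists_isHamiltonian_of_mem_darts {c : G.Walk a a}
    (hc : c.IsHamiltonianCycle) {d : G.Dart} (hd : d ∈ c.darts) :
    ∃ p : G.Walk d.snd d.fst, p.IsHamiltonian ∧ d.edge ∉ p.edges := by
  obtain ⟨q, r, rfl⟩ := c.exists_eq_append_cons_of_mem_darts hd
  have hedges := hc.isCycle.isTrail.edges_nodup
  simp only [edges_append, edges_cons, List.nodup_append, List.nodup_cons, List.mem_cons] at hedges
  refine ⟨r.append q, hc.isHamiltonian_tail.of_support_perm ?_, ?_⟩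
  · rw [support_tail_of_not_nil _ hc.not_nil, support_append, support_append, support_cons,
      List.tail_cons, List.tail_append_of_ne_nil q.support_ne_nil]
    exact List.perm_append_comm
  · simp only [edges_append, List.mem_append, not_or]
    exact ⟨hedges.2.1.1, fun h => hedges.2.2 _ h _ (Or.inl rfl) rfl⟩

variable [Fintype V] [DecidableRel G.Adj]

theorem IsHamiltonian.exists_mem_darts_adj_adj {p : G.Walk a b} (hp : p.IsHamiltonian)
    (hdeg : Fintype.card V ≤ G.degree a + G.degree b) :
    ∃ d ∈ p.darts, G.Adj a d.snd ∧ G.Adj b d.fst := by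
  have hnd := hp.isPath.support_nodup
  have hD : #p.darts.toFinset = Fintype.card V - 1 := by
    rw [List.toFinset_card_of_nodup (darts_nodup_of_support_nodup hnd), length_darts,
      hp.length_eq]
  have hA : #{d ∈ p.darts.toFinset | d.snd ∈ G.neighborFinset a} = G.degree a := by
    refine List.card_filter_toFinset_of_nodup_map (by rw [map_snd_darts]; exact hnd.tail)
      fun y hy => ?_
    have := hp.mem_support y
    rw [map_snd_darts]
    rw [← cons_tail_support, List.mem_cons] at this
    exact this.resolve_left (G.ne_of_adj ((G.mem_neighborFinset _ _).mp hy)).symm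
  have hB : #{d ∈ p.darts.toFinset | d.fst ∈ G.neighborFinset b} = G.degree b := by
    refine List.card_filter_toFinset_of_nodup_map
      (by rw [map_fst_darts]; exact hnd.sublist (List.dropLast_sublist _)) fun y hy => ?_
    have := hp.mem_support y
    rw [← map_fst_darts_append, List.mem_append, List.mem_singleton] at this
    exact this.resolve_right (G.ne_of_adj ((G.mem_neighborFinset _ _).mp hy)).symm
  have hpos : 0 < Fintype.card V := Fintype.card_pos_iff.mpr ⟨a⟩
  obtain ⟨d, hd⟩ := inter_nonempty_of_card_lt_card_add_card
    (filter_subset (fun d : G.Dart => d.snd ∈ G.neighborFinset a) p.darts.toFinset)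
    (filter_subset (fun d : G.Dart => d.fst ∈ G.neighborFinset b) p.darts.toFinset)
    (by omega)
  simp only [mem_inter, mem_filter, List.mem_toFinset, mem_neighborFinset] at hd
  exact ⟨d, hd.1.1, hd.1.2, hd.2.2⟩

theorem IsHamiltonian.isHamiltonian_of_card_le_degree_add_degree {p : G.Walk a b}
    (hp : p.IsHamiltonian) (hn : 3 ≤ Fintype.card V)
    (hdeg : Fintype.card V ≤ G.degree a + G.degree b) : G.IsHamiltonian := by
  obtain ⟨d, hd, had, hbd⟩ := hp.exists_mem_darts_adj_adj hdeg
  obtain ⟨q, r, rfl⟩ := exists_eq_append_cons_of_mem_darts _ hd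
  have hcross : (q.append (cons hbd.symm r.reverse)).IsHamiltonian := by
    refine hp.of_support_perm ?_
    simp only [support_append, support_cons, List.tail_cons, support_reverse]
    exact (List.reverse_perm _).append_left _
  exact fun _ => ⟨_, _, hcross.cons_isHamiltonianCycle had.symm hn⟩

end Walk

section

variable [Fintype V] [DecidableEq V]

theorem isHamiltonian_of_isHamiltonian_sup_edge [DecidableRel G.Adj] {x y : V}
    (hn : 3 ≤ Fintype.card V) (hdeg : Fintype.card V ≤ G.degree x + G.degree y)
    (h : (G ⊔ edge x y).IsHamiltonian) : G.IsHamiltonian := by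
  obtain ⟨w, c, hc⟩ := h (by omega)
  by_cases hxy : s(x, y) ∈ c.edges
  · obtain ⟨d, hd, hde⟩ := List.mem_map.mp hxy
    obtain ⟨p, hp, hpe⟩ := hc.exists_isHamiltonian_of_mem_darts hd
    refine (hp.transfer (Walk.edges_subset_edgeSet_of_notMem_edges_sup_edge (hde ▸ hpe))
      ).isHamiltonian_of_card_le_degree_add_degree hn ?_
    rcases Sym2.eq_iff.mp hde with ⟨h₁, h₂⟩ | ⟨h₁, h₂⟩ <;> rw [h₁, h₂] <;> omega
  · exact fun _ => ⟨w, _, hc.transfer (Walk.edges_subset_edgeSet_of_notMem_edges_sup_edge hxy)⟩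

theorem isHamiltonian_of_le_of_card_le_degree_add_degree {H K : SimpleGraph V}
    [DecidableRel H.Adj] (hn : 3 ≤ Fintype.card V) (hHK : H ≤ K) (hK : K.IsHamiltonian)
    (hdeg : ∀ x y, K.Adj x y → ¬H.Adj x y → Fintype.card V ≤ H.degree x + H.degree y) :
    H.IsHamiltonian := by
  classical
  suffices ∀ L, H ≤ L → L ≤ K → L.IsHamiltonian from this H le_rfl hHK
  intro L
  induction L using WellFoundedGT.induction with
  | _ L ih =>
  intro hHL hLK
  by_cases hKL : K ≤ L
  · exact hK.mono hKL
  obtain ⟨x, y, hKxy, hLxy⟩ : ∃ x y, K.Adj x y ∧ ¬L.Adj x y := by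
    simpa [le_iff_adj] using hKL
  refine isHamiltonian_of_isHamiltonian_sup_edge hn ?_ (ih _ (lt_sup_edge L x y hKxy.ne hLxy)
    (le_sup_of_le_left hHL) (sup_le hLK ((edge_le_iff K).mpr (Or.inr hKxy))))
  calc Fintype.card V ≤ H.degree x + H.degree y := hdeg x y hKxy fun h => hLxy (hHL h)
    _ ≤ L.degree x + L.degree y := add_le_add (degree_le_of_le hHL) (degree_le_of_le hHL)

theorem exists_isHamiltonian_top {u v : V} (huv : u ≠ v) :
    ∃ p : (⊤ : SimpleGraph V).Walk u v, p.IsHamiltonian := by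
  obtain ⟨l, hl, hmem, hne, hu, hv⟩ : ∃ l : List V, l.Nodup ∧ (∀ x, x ∈ l) ∧
      ∃ hne : l ≠ [], l.head hne = u ∧ l.getLast hne = v := by
    refine ⟨u :: (((univ.erase u).erase v).toList ++ [v]), ?_, fun x => ?_,
      List.cons_ne_nil _ _, rfl, by simp⟩
    · simp +contextual [huv, List.nodup_append, nodup_toList]
    · simp only [List.mem_cons, List.mem_append, mem_toList, mem_erase, mem_univ, and_true,
        List.not_mem_nil, or_false]
      tauto
  refine ⟨(Walk.ofSupport l hne hl.isChain).copy hu hv, fun x => ?_⟩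
  rw [Walk.support_copy, Walk.support_ofSupport]
  exact List.count_eq_one_of_mem hl (hmem x)

end

variable {u v : V}

variable (G u v) in
def addVertex : SimpleGraph (Option V) :=
  G.map Function.Embedding.some ⊔ edge none (some u) ⊔ edge none (some v)

@[simp]
theorem addVertex_adj_some_some {a b : V} :
    (G.addVertex u v).Adj (some a) (some b) ↔ G.Adj a b := by
  simp only [addVertex, sup_adj, map_adj]
  simp [edge_adj]

@[simp]
theorem addVertex_adj_none_some {b : V} :
    (G.addVertex u v).Adj none (some b) ↔ b = u ∨ b = v := by
  simp only [addVertex, sup_adj, map_adj]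
  simp [edge_adj]

@[simp]
theorem addVertex_adj_some_none {a : V} :
    (G.addVertex u v).Adj (some a) none ↔ a = u ∨ a = v := by
  rw [adj_comm, addVertex_adj_none_some]

theorem addVertex_mono {H : SimpleGraph V} (h : G ≤ H) : G.addVertex u v ≤ H.addVertex u v := by
  unfold addVertex
  gcongr

variable (G u v) in
def addVertexEmbedding : G ↪g G.addVertex u v where
  toEmbedding := .some
  map_rel_iff' := addVertex_adj_some_some

@[simp]
theorem coe_addVertexEmbedding : ⇑(G.addVertexEmbedding u v) = some := rfl

variable [Fintype V]

theorem degree_le_degree_addVertex [DecidableRel G.Adj] [DecidableRel (G.addVertex u v).Adj]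
    (a : V) : G.degree a ≤ (G.addVertex u v).degree (some a) :=
  (addVertexEmbedding G u v).toCopy.degree_le a

theorem card_le_degree_add_degree_addVertex [DecidableRel G.Adj]
    [DecidableRel (G.addVertex u v).Adj]
    (h : ∀ x y, x ≠ y → ¬G.Adj x y → Fintype.card V + 1 ≤ G.degree x + G.degree y)
    (x y : Option V) (hK : ((⊤ : SimpleGraph V).addVertex u v).Adj x y)
    (hG : ¬(G.addVertex u v).Adj x y) :
    Fintype.card (Option V) ≤ (G.addVertex u v).degree x + (G.addVertex u v).degree y := by
  rcases x with _ | a <;> rcases y with _ | b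
  · exact absurd hK (SimpleGraph.irrefl _)
  · simp_all
  · simp_all
  · simp only [addVertex_adj_some_some, top_adj] at hK hG
    calc Fintype.card (Option V) = Fintype.card V + 1 := Fintype.card_option
      _ ≤ G.degree a + G.degree b := h a b hK hG
      _ ≤ _ := add_le_add (degree_le_degree_addVertex a) (degree_le_degree_addVertex b)

variable [DecidableEq V]

theorem Walk.IsHamiltonian.isHamiltonian_addVertex {p : G.Walk u v} (hp : p.IsHamiltonian)
    (huv : u ≠ v) : (G.addVertex u v).IsHamiltonian := by
  have hv : (G.addVertex u v).Adj ((addVertexEmbedding G u v).toHom v) none := by simp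
  have hq : ((p.map (addVertexEmbedding G u v).toHom).concat hv).IsHamiltonian := by
    refine ((hp.isPath.map (addVertexEmbedding G u v).injective).concat ?_
      _).isHamiltonian_of_mem ?_
    · rw [Walk.support_map]
      simp
    · rintro (_ | x) <;> rw [Walk.support_concat, Walk.support_map] <;> simp [hp.mem_support]
  exact fun _ => ⟨none, _, hq.cons_isHamiltonianCycle (by simp) (three_le_card_option_of_ne huv)⟩

theorem IsHamiltonian.exists_isHamiltonian_of_addVertex (h : (G.addVertex u v).IsHamiltonian)
    (huv : u ≠ v) : ∃ p : G.Walk u v, p.IsHamiltonian := by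
  have : Nontrivial V := ⟨u, v, huv⟩
  obtain ⟨c, hc⟩ := h.exists_isHamiltonianCycle none
  obtain ⟨x, hx, q, rfl⟩ := Walk.not_nil_iff.mp hc.not_nil
  have hq : ¬q.Nil := Walk.not_nil_of_ne hx.ne.symm
  have hnd : (q.dropLast.support ++ [none]).Nodup := by
    rw [Walk.support_dropLast_concat hq]
    simpa using hc.isCycle.isPath_tail.support_nodup
  have hmem : ∀ z : V, some z ∈ q.dropLast.support := fun z => by
    simpa [← Walk.support_dropLast_concat hq] using hc.mem_support (some z)
  obtain ⟨b, rfl⟩ := Option.ne_none_iff_exists'.mp hx.ne.symm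
  obtain ⟨a, ha⟩ := Option.ne_none_iff_exists'.mp (q.adj_penultimate hq).ne
  obtain ⟨p, hp⟩ := (addVertexEmbedding G u v).exists_walk_support_map_eq q.dropLast
    (fun z hz => Option.ne_none_iff_exists.mp fun hnone => (List.nodup_append.mp hnd).2.2 _ hz _
      (List.mem_singleton_self _) hnone) rfl ha.symm
  have hpH : p.IsHamiltonian := by
    refine Walk.IsPath.isHamiltonian_of_mem ?_ fun z => ?_
    · rw [Walk.isPath_def, ← List.nodup_map_iff (addVertexEmbedding G u v).injective, hp]
      exact (List.nodup_append.mp hnd).1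
    · simpa [← hp] using hmem z
  have hb : b = u ∨ b = v := by simpa using hx
  have ha' : a = u ∨ a = v := by simpa [ha] using q.adj_penultimate hq
  rcases hb with rfl | rfl <;> rcases ha' with rfl | rfl
  · exact absurd rfl hpH.ne
  · exact ⟨p, hpH⟩
  · exact ⟨p.reverse, hpH.reverse⟩
  · exact absurd rfl hpH.ne

end SimpleGraph

open SimpleGraph

/-- If `G` is a graph of order `n` with `d(x) + d(y) ≥ n + 1` for every pair of nonadjacent
vertices `x, y`, then `G` is Hamiltonian-connected: between any two distinct vertices there
is a Hamiltonian path. -/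
theorem stmt_9 {V : Type*} [Fintype V] [DecidableEq V] (G : SimpleGraph V)
    [DecidableRel G.Adj]
    (h : ∀ x y : V, x ≠ y → ¬ G.Adj x y →
      Fintype.card V + 1 ≤ G.degree x + G.degree y) :
    ∀ u v : V, u ≠ v → ∃ p : G.Walk u v, p.IsHamiltonian := by
  intro u v huv
  classical
  obtain ⟨p, hp⟩ := exists_isHamiltonian_top huv
  exact (isHamiltonian_of_le_of_card_le_degree_add_degree (three_le_card_option_of_ne huv)
    (addVertex_mono le_top) (hp.isHamiltonian_addVertex huv)
    (card_le_degree_add_degree_addVertex h)).exists_isHamiltonian_of_addVertex huv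
end

section
/- Let G be a graph, x, y ∈ V(G), and let G' be obtained from G by adding, for each vertex z ∈ V(G) − {x,y}, a new pendant vertex z' adjacent only to z. Then G has a Hamiltonian path between x and y if and only if G' has a spanning tree with no vertex of degree 2. -/
/-!
A Hamiltonian `x`–`y` path of `G`, with the pendant edges of `G'` added, is a spanning tree of
`G'` in which `x` and `y` have degree 1 and every other vertex of `G` has degree 3.

Conversely, in a spanning tree `T` of `G'` every new vertex `z'` is a leaf hanging at `z`, so
deleting them leaves a spanning tree `H` of `G`, and `deg_T z = deg_H z + 1` for `z ∉ {x, y}`.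
If `T` has no vertex of degree 2, every leaf of `H` is `x` or `y`. The degree sum `2(n - 1)`
of `H` then forces `deg_H x = deg_H y = 1` and degree 2 everywhere else, so the `x`–`y` path
of `H` uses up all neighbours of each of its vertices and cannot miss a vertex.
-/

/-- The graph `G'` obtained from `G` by adding, for each vertex `z ∈ V(G) − {x,y}`, a new
pendant vertex `z'` adjacent only to `z`. -/
def pendantExt {V : Type*} (G : SimpleGraph V) (x y : V) :
    SimpleGraph (V ⊕ {z : V // z ≠ x ∧ z ≠ y}) :=
  SimpleGraph.fromRel (fun a b =>
    match a, b with
    | Sum.inl u, Sum.inl v => G.Adj u v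
    | Sum.inl u, Sum.inr z => u = z.1
    | _, _ => False)

namespace SimpleGraph

variable {V : Type*} {G : SimpleGraph V}

theorem isTree_iff_connected_and_sum_ncard_neighborSet [Fintype V] :
    G.IsTree ↔ G.Connected ∧ ∑ v, (G.neighborSet v).ncard + 2 = 2 * Fintype.card V := by
  classical
  have handshake : ∑ v, (G.neighborSet v).ncard = 2 * Nat.card G.edgeSet := by
    simp_rw [Set.ncard_eq_toFinset_card', Set.toFinset_card, card_neighborSet_eq_degree,
      sum_degrees_eq_twice_card_edges, edgeFinset_card, Nat.card_eq_fintype_card]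
  rw [isTree_iff_connected_and_card, handshake, Nat.card_eq_fintype_card (α := V)]
  lia

def pathDegree [DecidableEq V] (u v w : V) : ℕ := if w = u ∨ w = v then 1 else 2

theorem sum_pathDegree [Fintype V] [DecidableEq V] {u v : V} (huv : u ≠ v) :
    ∑ w, pathDegree u v w + 2 = 2 * Fintype.card V := by
  have hpair : Finset.univ.filter (fun w => w = u ∨ w = v) = {u, v} := by ext; simp
  have hcard :=
    Finset.card_filter_add_card_filter_not (s := Finset.univ) (fun w => w = u ∨ w = v)
  simp only [pathDegree, Finset.sum_ite, Finset.sum_const, smul_eq_mul, hpair,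
    Finset.card_pair huv, Finset.card_univ] at hcard ⊢
  lia

theorem Walk.IsPath.ncard_neighborSet_toSubgraph_eq_pathDegree [DecidableEq V] {u v w : V}
    {p : G.Walk u v} (hp : p.IsPath) (huv : u ≠ v) (hw : w ∈ p.support) :
    (p.toSubgraph.neighborSet w).ncard = pathDegree u v w := by
  have hnil : ¬ p.Nil := fun h => huv h.eq
  obtain ⟨i, rfl, hi⟩ := p.mem_support_iff_exists_getVert.mp hw
  by_cases hi0 : i = 0
  · subst hi0
    simp [pathDegree, hp.neighborSet_toSubgraph_startpoint hnil]
  by_cases hil : i = p.length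
  · subst hil
    simp [pathDegree, hp.neighborSet_toSubgraph_endpoint hnil]
  have hinj := fun j (hj : j ≤ p.length) (h : p.getVert i = p.getVert j) =>
    hp.getVert_injOn (by rw [Set.mem_ofPred_eq]; lia) (by rw [Set.mem_ofPred_eq]; lia) h
  have hu : p.getVert i ≠ u := fun h => hi0 (hinj 0 (by lia) (by simpa using h))
  have hv : p.getVert i ≠ v := fun h => hil (hinj p.length le_rfl (by simpa using h))
  rw [hp.ncard_neighborSet_toSubgraph_internal_eq_two hi0 (by lia)]
  simp [pathDegree, hu, hv]

theorem Walk.IsHamiltonian.ncard_neighborSet_spanningCoe_toSubgraph [DecidableEq V] {u v : V}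
    {p : G.Walk u v} (hp : p.IsHamiltonian) (huv : u ≠ v) (w : V) :
    (p.toSubgraph.spanningCoe.neighborSet w).ncard = pathDegree u v w :=
  hp.isPath.ncard_neighborSet_toSubgraph_eq_pathDegree huv (hp.mem_support w)

theorem Walk.IsHamiltonian.isTree_spanningCoe_toSubgraph [Fintype V] [DecidableEq V] {u v : V}
    {p : G.Walk u v} (hp : p.IsHamiltonian) (huv : u ≠ v) :
    p.toSubgraph.spanningCoe.IsTree := by
  let q : p.toSubgraph.spanningCoe.Walk u v :=
    p.transfer _ fun e he => by simpa [Subgraph.edgeSet_spanningCoe] using he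
  have hq : ∀ w, w ∈ q.support := fun w => by simp [q, hp.mem_support w]
  refine isTree_iff_connected_and_sum_ncard_neighborSet.mpr ⟨?_, ?_⟩
  · have := Nonempty.intro u
    exact ⟨fun a b => ((q.takeUntil a (hq a)).reverse.append (q.takeUntil b (hq b))).reachable⟩
  · simp_rw [hp.ncard_neighborSet_spanningCoe_toSubgraph huv]
    exact sum_pathDegree huv

theorem IsTree.ncard_neighborSet_eq_pathDegree [Fintype V] [DecidableEq V] {x y : V}
    (hG : G.IsTree) (hxy : x ≠ y) (hleaf : ∀ v, v ≠ x → v ≠ y → (G.neighborSet v).ncard ≠ 1)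
    (v : V) : (G.neighborSet v).ncard = pathDegree x y v := by
  have : Nontrivial V := ⟨x, y, hxy⟩
  have hpos w : 0 < (G.neighborSet w).ncard := by
    obtain ⟨w', hw'⟩ := exists_ne w
    exact (Set.ncard_pos (Set.toFinite _)).mpr
      ((hG.connected.preconnected w w').nonempty_neighborSet_left hw'.symm)
  have hle w (_ : w ∈ Finset.univ) : pathDegree x y w ≤ (G.neighborSet w).ncard := by
    unfold pathDegree
    split_ifs with h
    · exact hpos w
    · push Not at h
      have := hleaf w h.1 h.2
      have := hpos w
      lia
  have hsum := (isTree_iff_connected_and_sum_ncard_neighborSet.mp hG).2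
  rw [← sum_pathDegree hxy, add_left_inj] at hsum
  exact ((Finset.sum_eq_sum_iff_of_le hle).mp hsum.symm v (Finset.mem_univ v)).symm

theorem IsTree.exists_isHamiltonian_of_ncard_neighborSet_ne_one [Fintype V] [DecidableEq V]
    {x y : V} (hG : G.IsTree) (hxy : x ≠ y)
    (hleaf : ∀ v, v ≠ x → v ≠ y → (G.neighborSet v).ncard ≠ 1) :
    ∃ p : G.Walk x y, p.IsHamiltonian := by
  obtain ⟨p, hp⟩ := hG.connected.exists_isPath x y
  refine ⟨p, hp.isHamiltonian_iff.mpr fun v => by_contra fun hv => ?_⟩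
  obtain ⟨d, -, hd, hd'⟩ := (hG.connected.preconnected x v).some.exists_boundary_dart
    {w | w ∈ p.support} p.start_mem_support hv
  have hsub : p.toSubgraph.neighborSet d.fst ⊆ G.neighborSet d.fst :=
    fun w h => p.toSubgraph.adj_sub h
  have heq : p.toSubgraph.neighborSet d.fst = G.neighborSet d.fst :=
    Set.eq_of_subset_of_ncard_le hsub (by
      rw [hG.ncard_neighborSet_eq_pathDegree hxy hleaf,
        hp.ncard_neighborSet_toSubgraph_eq_pathDegree hxy hd]) (Set.toFinite _)
  have hadj : p.toSubgraph.Adj d.fst d.snd := by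
    change d.snd ∈ p.toSubgraph.neighborSet d.fst
    rw [heq]
    exact d.adj
  exact hd' (p.mem_verts_toSubgraph.mp (p.toSubgraph.edge_vert hadj.symm))

def withPendants (G : SimpleGraph V) (P : V → Prop) : SimpleGraph (V ⊕ {z // P z}) where
  Adj
    | .inl u, .inl v => G.Adj u v
    | .inl u, .inr z => u = z
    | .inr z, .inl u => u = z
    | .inr _, .inr _ => False
  symm := ⟨by rintro (u | z) (v | w) h <;> simp_all [G.adj_comm]⟩
  loopless := ⟨by rintro (u | z) h <;> simp_all⟩

section withPendants

variable {P : V → Prop}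

@[simp] lemma withPendants_adj_inl_inl {u v : V} :
    (G.withPendants P).Adj (.inl u) (.inl v) ↔ G.Adj u v := Iff.rfl

@[simp] lemma withPendants_adj_inl_inr {u : V} {z : {z // P z}} :
    (G.withPendants P).Adj (.inl u) (.inr z) ↔ u = z := Iff.rfl

@[simp] lemma withPendants_adj_inr_inl {u : V} {z : {z // P z}} :
    (G.withPendants P).Adj (.inr z) (.inl u) ↔ u = z := Iff.rfl

@[simp] lemma withPendants_adj_inr_inr {z w : {z // P z}} :
    ¬ (G.withPendants P).Adj (.inr z) (.inr w) := id

lemma withPendants_mono {G' : SimpleGraph V} (h : G ≤ G') :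
    G.withPendants P ≤ G'.withPendants P := by
  rintro (u | z) (v | w) hadj
  exacts [h hadj, hadj, hadj, hadj]

def withPendantsInl : G →g G.withPendants P where
  toFun := Sum.inl
  map_rel' := id

lemma neighborSet_withPendants_inr (z : {z // P z}) :
    (G.withPendants P).neighborSet (.inr z) = {.inl z.1} := by
  ext (u | w) <;> simp [eq_comm]

lemma ncard_neighborSet_withPendants_inl [Finite V] [DecidablePred P] (u : V) :
    ((G.withPendants P).neighborSet (.inl u)).ncard =
      (G.neighborSet u).ncard + if P u then 1 else 0 := by
  split_ifs with hu
  · have : (G.withPendants P).neighborSet (.inl u) =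
        insert (.inr ⟨u, hu⟩) (Sum.inl '' G.neighborSet u) := by
      ext (v | w)
      · simp
      · simp [Subtype.ext_iff, eq_comm]
    rw [this, Set.ncard_insert_of_notMem (by simp),
      Set.ncard_image_of_injective _ Sum.inl_injective]
  · have : (G.withPendants P).neighborSet (.inl u) = Sum.inl '' G.neighborSet u := by
      ext (v | w)
      · simp
      · simp only [mem_neighborSet, withPendants_adj_inl_inr, Set.mem_image, reduceCtorEq,
          and_false, exists_false, iff_false]
        rintro rfl
        exact hu w.2
    rw [this, Set.ncard_image_of_injective _ Sum.inl_injective, add_zero]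

lemma Reachable.of_withPendants {a b : V ⊕ {z // P z}} (h : (G.withPendants P).Reachable a b) :
    G.Reachable (Sum.elim id Subtype.val a) (Sum.elim id Subtype.val b) := by
  simp only [reachable_iff_reflTransGen] at h ⊢
  refine h.lift' _ ?_
  rintro (u | z) (v | w) hadj
  · exact .single hadj
  · exact (hadj : u = w) ▸ .refl
  · exact (hadj : v = z) ▸ .refl
  · exact hadj.elim

lemma Connected.withPendants (hG : G.Connected) : (G.withPendants P).Connected := by
  have hinl u v : (G.withPendants P).Reachable (.inl u) (.inl v) :=
    (hG.preconnected u v).map withPendantsInl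
  have hproj a : (G.withPendants P).Reachable a (.inl (Sum.elim id Subtype.val a)) := by
    rcases a with u | z
    exacts [.rfl, Adj.reachable rfl]
  have := hG.nonempty.map (Sum.inl (β := {z // P z}))
  exact ⟨fun a b => (hproj a).trans ((hinl _ _).trans (hproj b).symm)⟩

lemma isTree_withPendants_iff [Finite V] : (G.withPendants P).IsTree ↔ G.IsTree := by
  classical
  have := Fintype.ofFinite V
  constructor
  · intro hT
    have : Nonempty V := hT.connected.nonempty.map (Sum.elim id Subtype.val)
    exact ⟨⟨fun u v => (hT.connected.preconnected (.inl u) (.inl v)).of_withPendants⟩,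
      hT.isAcyclic.comap withPendantsInl Sum.inl_injective⟩
  · intro hG
    rw [isTree_iff_connected_and_sum_ncard_neighborSet] at hG ⊢
    refine ⟨hG.1.withPendants, ?_⟩
    simp only [Fintype.sum_sum_type, ncard_neighborSet_withPendants_inl,
      neighborSet_withPendants_inr, Set.ncard_singleton, Finset.sum_add_distrib,
      Finset.sum_boole, Nat.cast_id, Finset.sum_const, smul_eq_mul, mul_one, Finset.card_univ,
      Fintype.card_sum, Fintype.card_subtype]
    lia

lemma eq_withPendants_comap_inl {T : SimpleGraph (V ⊕ {z // P z})} (hT : T ≤ G.withPendants P)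
    (hconn : T.Connected) : T = (T.comap Sum.inl).withPendants P := by
  have hpendant (z : {z // P z}) : T.Adj (.inr z) (.inl z.1) := by
    obtain ⟨b, hb⟩ := (hconn.preconnected (.inr z) (.inl z.1)).nonempty_neighborSet_left
      Sum.inr_ne_inl
    rcases b with u | w
    · exact (hT hb : u = z) ▸ hb
    · exact (hT hb).elim
  ext (u | z) (v | w)
  · rfl
  · exact ⟨fun h => hT h, fun h => (show u = w from h) ▸ (hpendant w).symm⟩
  · exact ⟨fun h => hT h, fun h => (show v = z from h) ▸ hpendant z⟩
  · exact ⟨fun h => hT h, False.elim⟩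

end withPendants

end SimpleGraph

open SimpleGraph

theorem pendantExt_eq_withPendants {V : Type*} (G : SimpleGraph V) (x y : V) :
    pendantExt G x y = G.withPendants fun z => z ≠ x ∧ z ≠ y := by
  ext (u | z) (v | w) <;> simp +contextual [pendantExt, G.adj_comm, eq_comm, G.ne_of_adj]

/-- `G` has a Hamiltonian path between `x` and `y` if and only if `G'` (the graph obtained
from `G` by attaching a pendant vertex to every vertex other than `x` and `y`) has a
spanning tree with no vertex of degree 2 (a HIST). -/
theorem stmt_12 {V : Type*} [Fintype V] [DecidableEq V] (G : SimpleGraph V)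
    (x y : V) (hxy : x ≠ y) :
    (∃ p : G.Walk x y, p.IsHamiltonian) ↔
      ∃ T : SimpleGraph (V ⊕ {z : V // z ≠ x ∧ z ≠ y}),
        T ≤ pendantExt G x y ∧ T.IsTree ∧
        ∀ v, (T.neighborSet v).ncard ≠ 2 := by
  rw [pendantExt_eq_withPendants]
  constructor
  · rintro ⟨p, hp⟩
    refine ⟨p.toSubgraph.spanningCoe.withPendants _,
      withPendants_mono p.toSubgraph.spanningCoe_le,
      isTree_withPendants_iff.mpr (hp.isTree_spanningCoe_toSubgraph hxy), ?_⟩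
    rintro (u | z)
    · rw [ncard_neighborSet_withPendants_inl,
        hp.ncard_neighborSet_spanningCoe_toSubgraph hxy, pathDegree]
      split_ifs <;> simp_all
    · simp [neighborSet_withPendants_inr]
  · rintro ⟨T, hle, hT, hdeg⟩
    have hTeq := eq_withPendants_comap_inl hle hT.connected
    rw [hTeq] at hT hdeg
    have hleaf v (hvx : v ≠ x) (hvy : v ≠ y) : ((T.comap Sum.inl).neighborSet v).ncard ≠ 1 :=
      fun hv => hdeg (.inl v) (by rw [ncard_neighborSet_withPendants_inl, hv, if_pos ⟨hvx, hvy⟩])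
    obtain ⟨p, hp⟩ :=
      (isTree_withPendants_iff.mp hT).exists_isHamiltonian_of_ncard_neighborSet_ne_one hxy hleaf
    have hHG : T.comap Sum.inl ≤ G := fun _ _ h => hle h
    exact ⟨p.mapLe hHG, hp.map _ Function.bijective_id⟩
end
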